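/- arXiv:2004.02837 — 5 statements merged into one kernel-verified Lean document; each statement's English description precedes it below -/
import Mathlib

section
/- An Osborne update never increases the potential: with notation as in the Osborne update lemma, Φ(x') ≤ Φ(x), with equality iff r_k(A) = c_k(A). -/
/-! Let `r = r_k(A)`, `c = c_k(A)` and `s = exp t = √(c / r)` for the shift `t` of `x k`. Then
the update multiplies the off-diagonal entries of row `k` of `A` by `s` and those of column `k` by
`s⁻¹`. The potential sum therefore changes by `(s - 1) r + (s⁻¹ - 1) c + (s - 1)(s⁻¹ - 1) A k k`,
which for `c = s² r` equals `-(s - 1)² (r + A k k / s) ≤ 0` and vanishes exactly when `s = 1`,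
i.e. when `r = c`. -/

open Finset Function

theorem sum_ite_mul_mul_ite {ι R : Type*} [Fintype ι] [DecidableEq ι] [CommRing R]
    (B : Matrix ι ι R) (k : ι) (a b : R) :
    ∑ i, ∑ j, (if i = k then a else 1) * B i j * (if j = k then b else 1) =
      ∑ i, ∑ j, B i j + (a - 1) * ∑ j, B k j + (b - 1) * ∑ i, B i k
        + (a - 1) * (b - 1) * B k k := by
  have split_one : ∀ (c : R) (i : ι),
      (if i = k then c else 1) = 1 + if i = k then c - 1 else 0 := by
    intro c i; split_ifs <;> ring
  simp only [split_one, add_mul, mul_add, one_mul, mul_one, sum_add_distrib, ite_mul, mul_ite,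
    zero_mul, mul_zero, sum_ite_eq', mem_univ, if_true, sum_ite_irrel, sum_const_zero, ← mul_sum,
    ← sum_mul]
  ring

theorem exp_update_sub_update {ι : Type*} [DecidableEq ι] (x : ι → ℝ) (k : ι) (t : ℝ) (i j : ι) :
    Real.exp (update x k (x k + t) i - update x k (x k + t) j) =
      (if i = k then Real.exp t else 1) * Real.exp (x i - x j) *
        (if j = k then Real.exp (-t) else 1) := by
  by_cases hi : i = k <;> by_cases hj : j = k
  · subst hi hj; simp [← Real.exp_add]
  · subst hi
    simp only [update_self, update_of_ne hj, if_true, if_neg hj, mul_one, ← Real.exp_add]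
    ring_nf
  · subst hj
    simp only [update_self, update_of_ne hi, if_true, if_neg hi, one_mul, ← Real.exp_add]
    ring_nf
  · simp [hi, hj]

theorem sum_exp_sub_mul_pos {ι : Type*} [Fintype ι] {K : Matrix ι ι ℝ} (hK : ∀ i j, 0 ≤ K i j)
    (hpos : ∃ i j, 0 < K i j) (y : ι → ℝ) : 0 < ∑ i, ∑ j, Real.exp (y i - y j) * K i j := by
  obtain ⟨i₀, j₀, hK₀⟩ := hpos
  have hterm : ∀ i j, 0 ≤ Real.exp (y i - y j) * K i j := fun i j => by positivity [hK i j]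
  exact sum_pos' (fun i _ => sum_nonneg fun j _ => hterm i j)
    ⟨i₀, mem_univ _, sum_pos' (fun j _ => hterm i₀ j) ⟨j₀, mem_univ _, by positivity⟩⟩

section OsborneChange

variable {r c d s : ℝ}

theorem osborne_change_eq (hs : s ≠ 0) (hc : c = s ^ 2 * r) :
    (s - 1) * r + (s⁻¹ - 1) * c + (s - 1) * (s⁻¹ - 1) * d = -((s - 1) ^ 2 * (r + d / s)) := by
  subst hc; field_simp; ring

theorem osborne_change_nonpos (hr : 0 < r) (hd : 0 ≤ d) (hs : 0 < s) (hc : c = s ^ 2 * r) :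
    (s - 1) * r + (s⁻¹ - 1) * c + (s - 1) * (s⁻¹ - 1) * d ≤ 0 := by
  rw [osborne_change_eq hs.ne' hc]
  exact neg_nonpos.2 (by positivity)

theorem osborne_change_eq_zero_iff (hr : 0 < r) (hd : 0 ≤ d) (hs : 0 < s) (hc : c = s ^ 2 * r) :
    (s - 1) * r + (s⁻¹ - 1) * c + (s - 1) * (s⁻¹ - 1) * d = 0 ↔ r = c := by
  have hrd : r + d / s ≠ 0 := by positivity
  rw [osborne_change_eq hs.ne' hc, neg_eq_zero, mul_eq_zero, or_iff_left hrd, sq_eq_zero_iff,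
    sub_eq_zero, hc]
  constructor
  · rintro rfl; ring
  · intro h
    exact (pow_eq_one_iff_of_nonneg hs.le two_ne_zero).1
      (mul_right_cancel₀ hr.ne' (by rw [one_mul, ← h]))

end OsborneChange

/-- An Osborne update never increases the potential, with equality iff r_k(A) = c_k(A). -/
theorem osborne_update_monotone (n : ℕ) (K : Matrix (Fin n) (Fin n) ℝ)
    (hK : ∀ i j, 0 ≤ K i j) (hpos : ∃ i j, 0 < K i j)
    (x : Fin n → ℝ) (k : Fin n)
    (A : Matrix (Fin n) (Fin n) ℝ)
    (hA : ∀ i j, A i j = Real.exp (x i - x j) * K i j)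
    (hr : 0 < ∑ j, A k j) (hc : 0 < ∑ i, A i k)
    (x' : Fin n → ℝ)
    (hx' : x' = Function.update x k
      (x k + (Real.log (∑ i, A i k) - Real.log (∑ j, A k j)) / 2)) :
    Real.log (∑ i, ∑ j, Real.exp (x' i - x' j) * K i j)
        ≤ Real.log (∑ i, ∑ j, Real.exp (x i - x j) * K i j) ∧
      (Real.log (∑ i, ∑ j, Real.exp (x' i - x' j) * K i j)
          = Real.log (∑ i, ∑ j, Real.exp (x i - x j) * K i j)
        ↔ (∑ j, A k j) = (∑ i, A i k)) := by
  set r := ∑ j, A k j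
  set c := ∑ i, A i k
  set t := (Real.log c - Real.log r) / 2
  have hcr : c = Real.exp t ^ 2 * r := by
    rw [← Real.exp_nat_mul, Nat.cast_ofNat, mul_div_cancel₀ _ two_ne_zero, Real.exp_sub,
      Real.exp_log hc, Real.exp_log hr, div_mul_cancel₀ _ hr.ne']
  have hentry : ∀ i j, Real.exp (x' i - x' j) * K i j =
      (if i = k then Real.exp t else 1) * A i j * (if j = k then Real.exp (-t) else 1) := by
    intro i j; rw [hx', exp_update_sub_update, hA]; ring
  have hsum : ∑ i, ∑ j, Real.exp (x' i - x' j) * K i j = ∑ i, ∑ j, Real.exp (x i - x j) * K i j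
      + ((Real.exp t - 1) * r + ((Real.exp t)⁻¹ - 1) * c
        + (Real.exp t - 1) * ((Real.exp t)⁻¹ - 1) * A k k) := by
    simp only [hentry, sum_ite_mul_mul_ite, ← hA, Real.exp_neg]; ring
  have hd : 0 ≤ A k k := by rw [hA]; positivity [hK k k]
  have hS := sum_exp_sub_mul_pos hK hpos x
  have hS' := sum_exp_sub_mul_pos hK hpos x'
  rw [hsum] at hS' ⊢
  refine ⟨Real.log_le_log hS' ?_, ?_⟩
  · linarith [osborne_change_nonpos hr hd (Real.exp_pos t) hcr]
  · rw [Real.log_injOn_pos.eq_iff hS' hS, add_eq_left]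
    exact osborne_change_eq_zero_iff hr hd (Real.exp_pos t) hcr
end

section
/- Bound on initial potential: If K ∈ ℝ_{≥0}^{n×n} is irreducible (the directed graph G_K on [n] with edges {(i,j): K_{ij} > 0} is strongly connected), then Φ(0) − Φ* ≤ log κ, where Φ* = inf_x Φ(x) and κ = (Σ_{ij} K_{ij})/K_min with K_min the minimum nonzero entry of K. -/
/-!
As `Φ(0) = log Σ K`, it suffices that `Φ(x) ≥ log K_min` for every `x`.
At a maximiser `a` of `x`, irreducibility provides an edge `a → b` of `G_K`; its term `e^{x_a - x_b} K_{ab} ≥ K_{ab} ≥ K_min` already bounds the whole (nonnegative) sum.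
-/

open Finset Relation Real

theorem Relation.ReflTransGen.exists_rel_of_rel {α : Type*} {r : α → α → Prop} {a b c : α}
    (hab : ReflTransGen r a b) (hbc : r b c) : ∃ d, r a d := by
  obtain ⟨d, had, -⟩ := TransGen.head'_iff.mp (TransGen.tail' hab hbc)
  exact ⟨d, had⟩

section ExpWeightedSum

variable {ι : Type*} [Fintype ι] (K : Matrix ι ι ℝ) (hK : ∀ i j, 0 ≤ K i j)
include hK

theorem Matrix.entry_le_sum_exp_sub_mul (x : ι → ℝ) {a b : ι} (hx : x b ≤ x a) :
    K a b ≤ ∑ i, ∑ j, exp (x i - x j) * K i j := by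
  have hterm : ∀ i j, 0 ≤ exp (x i - x j) * K i j := fun i j => mul_nonneg (exp_pos _).le (hK i j)
  calc K a b ≤ exp (x a - x b) * K a b :=
        le_mul_of_one_le_left (hK a b) (one_le_exp (sub_nonneg.mpr hx))
    _ ≤ ∑ j, exp (x a - x j) * K a j := single_le_sum (fun j _ => hterm a j) (mem_univ b)
    _ ≤ ∑ i, ∑ j, exp (x i - x j) * K i j :=
        single_le_sum (f := fun i => ∑ j, exp (x i - x j) * K i j)
          (fun i _ => sum_nonneg fun j _ => hterm i j) (mem_univ a)

theorem Matrix.le_sum_exp_sub_mul_of_irreducible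
    (hirr : ∀ u v, ReflTransGen (fun i j => 0 < K i j) u v)
    {Kmin : ℝ} (hmin : ∀ i j, 0 < K i j → Kmin ≤ K i j)
    {i₀ j₀ : ι} (hpos : 0 < K i₀ j₀) (x : ι → ℝ) :
    Kmin ≤ ∑ i, ∑ j, exp (x i - x j) * K i j := by
  have : Nonempty ι := ⟨i₀⟩
  obtain ⟨a, ha⟩ := Finite.exists_max x
  obtain ⟨b, hab⟩ := (hirr a i₀).exists_rel_of_rel hpos
  exact (hmin a b hab).trans (K.entry_le_sum_exp_sub_mul hK x (ha b))

end ExpWeightedSum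

/-- Bound on the initial potential: Φ(0) - Φ* ≤ log κ. -/
theorem initial_potential_bound (n : ℕ) (K : Matrix (Fin n) (Fin n) ℝ)
    (hK : ∀ i j, 0 ≤ K i j)
    (hirr : ∀ u v : Fin n, Relation.ReflTransGen (fun i j => 0 < K i j) u v)
    (Kmin : ℝ)
    (hmin : ∀ i j, 0 < K i j → Kmin ≤ K i j)
    (hmem : ∃ i j, 0 < K i j ∧ K i j = Kmin) :
    Real.log (∑ i, ∑ j, K i j) -
        (⨅ x : Fin n → ℝ, Real.log (∑ i, ∑ j, Real.exp (x i - x j) * K i j))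
      ≤ Real.log ((∑ i, ∑ j, K i j) / Kmin) := by
  obtain ⟨i₀, j₀, hpos, rfl⟩ := hmem
  have hsum : 0 < ∑ i, ∑ j, K i j :=
    hpos.trans_le (by simpa using K.entry_le_sum_exp_sub_mul hK 0 (le_refl (0 : ℝ)))
  have hlower : ∀ x : Fin n → ℝ,
      log (K i₀ j₀) ≤ log (∑ i, ∑ j, exp (x i - x j) * K i j) := fun x =>
    log_le_log hpos (K.le_sum_exp_sub_mul_of_irreducible hK hirr hmin hpos x)
  rw [log_div hsum.ne' hpos.ne']
  linarith [le_ciInf hlower]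
end

section
/- Variation norm of nontrivial balancings: Let K ∈ ℝ_{≥0}^{n×n} be irreducible, d the diameter of the directed graph G_K, and κ = (Σ_{ij}K_{ij})/K_min. If x ∈ ℝⁿ satisfies Φ(x) ≤ Φ(0), then var(x) := max_i x_i − min_j x_j ≤ d·log κ. -/
/-!
Since Φ(x) ≤ Φ(0), every single term e^{x_i - x_j} K_{ij} of the sum defining e^{Φ(x)} is at most
Σ_{ij} K_{ij}. On an edge of G_K we have K_{ij} ≥ K_min, so x_i - x_j ≤ log κ. Telescoping along a
path of length at most d from a maximiser of x to a minimiser gives var(x) ≤ d log κ.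
-/

open Finset Real

theorem le_sum_sum_of_nonneg {ι : Type*} [Fintype ι] {f : ι → ι → ℝ} (hf : ∀ i j, 0 ≤ f i j)
    (i j : ι) : f i j ≤ ∑ i, ∑ j, f i j :=
  calc f i j ≤ ∑ j, f i j := single_le_sum (fun k _ => hf i k) (mem_univ j)
    _ ≤ ∑ i, ∑ j, f i j :=
      single_le_sum (f := fun i => ∑ j, f i j) (fun k _ => sum_nonneg fun l _ => hf k l)
        (mem_univ i)

theorem sub_le_mul_of_forall_sub_succ_le {f : ℕ → ℝ} {m : ℕ} {L : ℝ}
    (hf : ∀ l < m, f l - f (l + 1) ≤ L) : f 0 - f m ≤ m * L := by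
  calc f 0 - f m = ∑ l ∈ range m, (f l - f (l + 1)) := (sum_range_sub' f m).symm
    _ ≤ #(range m) • L := sum_le_card_nsmul _ _ _ fun l hl => hf l (mem_range.mp hl)
    _ = m * L := by rw [card_range, nsmul_eq_mul]

theorem exists_ciSup_sub_ciInf_eq {ι : Type*} [Finite ι] [Nonempty ι] (x : ι → ℝ) :
    ∃ u v, (⨆ i, x i) - (⨅ i, x i) = x u - x v := by
  obtain ⟨u, hu⟩ := exists_eq_ciSup_of_finite (f := x)
  obtain ⟨v, hv⟩ := exists_eq_ciInf_of_finite (f := x)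
  exact ⟨u, v, by rw [hu, hv]⟩

section Balancing

variable {ι : Type*} [Fintype ι] {K : ι → ι → ℝ} {x : ι → ℝ}

theorem sum_sum_exp_sub_mul_le_of_log_le (hK : ∀ i j, 0 ≤ K i j) {i₀ j₀ : ι}
    (hpos : 0 < K i₀ j₀)
    (hx : log (∑ i, ∑ j, exp (x i - x j) * K i j) ≤ log (∑ i, ∑ j, K i j)) :
    ∑ i, ∑ j, exp (x i - x j) * K i j ≤ ∑ i, ∑ j, K i j := by
  have hterm : ∀ i j, 0 ≤ exp (x i - x j) * K i j := fun i j => by positivity [hK i j]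
  refine (log_le_log_iff ?_ ?_).mp hx
  · exact (mul_pos (exp_pos _) hpos).trans_le (le_sum_sum_of_nonneg hterm i₀ j₀)
  · exact hpos.trans_le (le_sum_sum_of_nonneg hK i₀ j₀)

theorem sub_le_log_div_of_sum_sum_exp_sub_mul_le (hK : ∀ i j, 0 ≤ K i j)
    (hx : ∑ i, ∑ j, exp (x i - x j) * K i j ≤ ∑ i, ∑ j, K i j) {c : ℝ} {i j : ι}
    (hc : 0 < c) (hcK : c ≤ K i j) : x i - x j ≤ log ((∑ i, ∑ j, K i j) / c) := by
  have hterm : exp (x i - x j) * K i j ≤ ∑ i, ∑ j, K i j :=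
    (le_sum_sum_of_nonneg (fun i j => by positivity [hK i j]) i j).trans hx
  have hexp : exp (x i - x j) ≤ (∑ i, ∑ j, K i j) / c := by
    rw [le_div_iff₀ hc]
    exact (mul_le_mul_of_nonneg_left hcK (exp_pos _).le).trans hterm
  simpa using log_le_log (exp_pos _) hexp

end Balancing

theorem variation_norm_bound_general (n : ℕ) (K : Matrix (Fin n) (Fin n) ℝ)
    (hK : ∀ i j, 0 ≤ K i j)
    (Kmin : ℝ)
    (hmin : ∀ i j, 0 < K i j → Kmin ≤ K i j)
    (hmem : ∃ i j, 0 < K i j ∧ K i j = Kmin)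
    (d : ℕ)
    (hd : ∀ u v : Fin n, ∃ m ≤ d, ∃ p : ℕ → Fin n,
      p 0 = u ∧ p m = v ∧ ∀ l < m, 0 < K (p l) (p (l + 1)))
    (x : Fin n → ℝ)
    (hx : Real.log (∑ i, ∑ j, Real.exp (x i - x j) * K i j)
      ≤ Real.log (∑ i, ∑ j, K i j)) :
    (⨆ i, x i) - (⨅ i, x i) ≤ d * Real.log ((∑ i, ∑ j, K i j) / Kmin) := by
  obtain ⟨i₀, j₀, hpos, rfl⟩ := hmem
  have : Nonempty (Fin n) := ⟨i₀⟩
  have hsum := sum_sum_exp_sub_mul_le_of_log_le hK hpos hx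
  have hedge : ∀ i j, 0 < K i j → x i - x j ≤ log ((∑ i, ∑ j, K i j) / K i₀ j₀) :=
    fun i j hij => sub_le_log_div_of_sum_sum_exp_sub_mul_le hK hsum hpos (hmin i j hij)
  have hlog : 0 ≤ log ((∑ i, ∑ j, K i j) / K i₀ j₀) :=
    log_nonneg ((one_le_div hpos).mpr (le_sum_sum_of_nonneg hK i₀ j₀))
  obtain ⟨u, v, huv⟩ := exists_ciSup_sub_ciInf_eq x
  obtain ⟨m, hmd, p, rfl, rfl, hp⟩ := hd u v
  calc (⨆ i, x i) - (⨅ i, x i) = x (p 0) - x (p m) := huv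
    _ ≤ m * log ((∑ i, ∑ j, K i j) / K i₀ j₀) :=
      sub_le_mul_of_forall_sub_succ_le (f := x ∘ p) fun l hl => hedge _ _ (hp l hl)
    _ ≤ d * log ((∑ i, ∑ j, K i j) / K i₀ j₀) := by gcongr

/-- Variation norm of nontrivial balancings: if Φ(x) ≤ Φ(0) then var(x) ≤ d log κ. -/
theorem variation_norm_bound (n : ℕ) (hn : 0 < n) (K : Matrix (Fin n) (Fin n) ℝ)
    (hK : ∀ i j, 0 ≤ K i j)
    (Kmin : ℝ)
    (hmin : ∀ i j, 0 < K i j → Kmin ≤ K i j)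
    (hmem : ∃ i j, 0 < K i j ∧ K i j = Kmin)
    (d : ℕ)
    (hd : ∀ u v : Fin n, ∃ m ≤ d, ∃ p : ℕ → Fin n,
      p 0 = u ∧ p m = v ∧ ∀ l < m, 0 < K (p l) (p (l + 1)))
    (x : Fin n → ℝ)
    (hx : Real.log (∑ i, ∑ j, Real.exp (x i - x j) * K i j)
      ≤ Real.log (∑ i, ∑ j, K i j)) :
    (⨆ i, x i) - (⨅ i, x i) ≤ d * Real.log ((∑ i, ∑ j, K i j) / Kmin) :=
  variation_norm_bound_general n K hK Kmin hmin hmem d hd x hx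
end

section
/- Lower bound on Hellinger imbalance via convexity: Let K ∈ ℝ_{≥0}^{n×n} be irreducible with graph diameter d and κ = (Σ_{ij}K_{ij})/K_min. Let x ∈ ℝⁿ with Φ(x) ≤ Φ(0), let P be the normalization of diag(e^x)K diag(e^{−x}), and suppose ‖r(P) − c(P)‖₁ > ε. Then H²(r(P), c(P)) ≥ (1/8)·max( (Φ(x) − Φ*)/(d log κ), ε )². -/
/-!
Jensen's inequality for `exp`, with the entries of `P` as weights, is the convexity of
`Φ = log ∘ scaledMass`: `Φ x - Φ x* ≤ ⟪r - c, x - x*⟫`. As `r - c` sums to zero, this pairing is at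
most `‖r - c‖₁` times half the oscillation of `x - x*`. A scaling `z` with `Φ z ≤ Φ 0` has
`e^(z i - z j) K i j ≤ ∑ K` on every edge, so `z` grows by at most `log κ` per edge and, along paths of
length `≤ d`, oscillates by at most `d log κ`; hence `(Φ x - Φ*) / (d log κ) ≤ ‖r - c‖₁`. Finally
Cauchy–Schwarz applied to `|r k - c k| = |√r k - √c k| (√r k + √c k)` gives `‖r - c‖₁² ≤ 8 H²(r, c)`.
-/

open Finset Real

section Hellinger

variable {ι : Type*} (s : Finset ι) {r c : ι → ℝ}

theorem sq_sum_abs_sub_le_sum_mul_sum_sq_sqrt_sub (hr : ∀ k ∈ s, 0 ≤ r k)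
    (hc : ∀ k ∈ s, 0 ≤ c k) :
    (∑ k ∈ s, |r k - c k|) ^ 2
      ≤ 2 * (∑ k ∈ s, r k + ∑ k ∈ s, c k) * ∑ k ∈ s, (√(r k) - √(c k)) ^ 2 := by
  have factor : ∀ k ∈ s, |r k - c k| = |√(r k) - √(c k)| * (√(r k) + √(c k)) := by
    intro k hk
    rw [← abs_of_nonneg (by positivity : 0 ≤ √(r k) + √(c k)), ← abs_mul]
    congr 1
    linear_combination -sq_sqrt (hr k hk) + sq_sqrt (hc k hk)
  have sum_sq_le : ∑ k ∈ s, (√(r k) + √(c k)) ^ 2 ≤ 2 * (∑ k ∈ s, r k + ∑ k ∈ s, c k) := by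
    rw [← sum_add_distrib, mul_sum]
    refine sum_le_sum fun k hk => ?_
    nlinarith [sq_nonneg (√(r k) - √(c k)), sq_sqrt (hr k hk), sq_sqrt (hc k hk)]
  calc (∑ k ∈ s, |r k - c k|) ^ 2
      = (∑ k ∈ s, |√(r k) - √(c k)| * (√(r k) + √(c k))) ^ 2 := by rw [sum_congr rfl factor]
    _ ≤ (∑ k ∈ s, (√(r k) - √(c k)) ^ 2) * ∑ k ∈ s, (√(r k) + √(c k)) ^ 2 := by
      simpa only [sq_abs] using
        sum_mul_sq_le_sq_mul_sq s (fun k => |√(r k) - √(c k)|) fun k => √(r k) + √(c k)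
    _ ≤ _ := by
      rw [mul_comm]
      exact mul_le_mul_of_nonneg_right sum_sq_le (sum_nonneg fun k _ => sq_nonneg _)

end Hellinger

theorem sum_mul_le_sum_abs_mul_of_sum_eq_zero {ι : Type*} [Fintype ι] [Nonempty ι]
    {g w : ι → ℝ} {D : ℝ} (hg : ∑ k, g k = 0) (hw : ∀ u v, w u - w v ≤ D) :
    ∑ k, g k * w k ≤ (∑ k, |g k|) * (D / 2) := by
  obtain ⟨a, -, ha⟩ := exists_max_image univ w univ_nonempty
  obtain ⟨b, -, hb⟩ := exists_min_image univ w univ_nonempty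
  have hD := hw a b
  calc ∑ k, g k * w k = ∑ k, g k * (w k - (w a + w b) / 2) := by
        simp only [mul_sub, sum_sub_distrib, ← sum_mul, hg, zero_mul, sub_zero]
    _ ≤ ∑ k, |g k| * (D / 2) := by
      refine sum_le_sum fun k _ => (le_abs_self _).trans ?_
      rw [abs_mul]
      gcongr
      have := ha k (mem_univ k)
      have := hb k (mem_univ k)
      rw [abs_le]; constructor <;> linarith
    _ = (∑ k, |g k|) * (D / 2) := by rw [sum_mul]

theorem sub_le_mul_of_chain {ι : Type*} (f : ι → ℝ) (p : ℕ → ι) {ℓ : ℝ} :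
    ∀ m : ℕ, (∀ l < m, f (p l) - f (p (l + 1)) ≤ ℓ) → f (p 0) - f (p m) ≤ m * ℓ
  | 0, _ => by simp
  | m + 1, h => by
    have := sub_le_mul_of_chain f p m fun l hl => h l (hl.trans m.lt_succ_self)
    have := h m m.lt_succ_self
    push_cast; linarith

theorem sum_sum_mul_sub {ι : Type*} [Fintype ι] (a : ι → ι → ℝ) (u : ι → ℝ) :
    ∑ i, ∑ j, a i j * (u i - u j) = ∑ k, (∑ j, a k j - ∑ i, a i k) * u k := by
  simp only [mul_sub, sub_mul, sum_sub_distrib, sum_mul]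
  rw [sum_comm (f := fun i j => a i j * u j)]

namespace MatrixScaling

variable {ι : Type*} [Fintype ι] {K : Matrix ι ι ℝ}

variable (K) in
noncomputable def scaledMass (z : ι → ℝ) : ℝ := ∑ i, ∑ j, exp (z i - z j) * K i j

variable (K) in
noncomputable def normalizedScaling (z : ι → ℝ) : Matrix ι ι ℝ :=
  fun i j => exp (z i - z j) * K i j / scaledMass K z

theorem scaledMass_zero : scaledMass K 0 = ∑ i, ∑ j, K i j := by
  simp [scaledMass]

theorem exp_sub_mul_le_scaledMass (hK : ∀ i j, 0 ≤ K i j) (z : ι → ℝ) (i j : ι) :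
    exp (z i - z j) * K i j ≤ scaledMass K z := by
  have hterm : ∀ i j, 0 ≤ exp (z i - z j) * K i j := fun i j => by have := hK i j; positivity
  calc exp (z i - z j) * K i j ≤ ∑ j', exp (z i - z j') * K i j' :=
        single_le_sum (fun j' _ => hterm i j') (mem_univ j)
    _ ≤ scaledMass K z :=
        single_le_sum (fun i' _ => sum_nonneg fun j' _ => hterm i' j') (mem_univ i)

theorem scaledMass_pos (hK : ∀ i j, 0 ≤ K i j) {i j : ι} (hij : 0 < K i j) (z : ι → ℝ) :
    0 < scaledMass K z :=
  (mul_pos (exp_pos _) hij).trans_le (exp_sub_mul_le_scaledMass hK z i j)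

theorem normalizedScaling_nonneg (hK : ∀ i j, 0 ≤ K i j) (z : ι → ℝ) (i j : ι) :
    0 ≤ normalizedScaling K z i j :=
  have hterm : 0 ≤ exp (z i - z j) * K i j := mul_nonneg (exp_pos _).le (hK i j)
  div_nonneg hterm (hterm.trans (exp_sub_mul_le_scaledMass hK z i j))

theorem sum_sum_normalizedScaling {z : ι → ℝ} (hz : scaledMass K z ≠ 0) :
    ∑ i, ∑ j, normalizedScaling K z i j = 1 := by
  simp only [normalizedScaling, ← sum_div]
  exact div_self hz

theorem sub_le_log_div_of_scaledMass_le (hK : ∀ i j, 0 ≤ K i j) {z : ι → ℝ} {M : ℝ}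
    (hM : scaledMass K z ≤ M) {i j : ι} (hij : 0 < K i j) :
    z i - z j ≤ log (M / K i j) := by
  rw [le_log_iff_exp_le (div_pos ((scaledMass_pos hK hij z).trans_le hM) hij), le_div_iff₀ hij]
  exact (exp_sub_mul_le_scaledMass hK z i j).trans hM

theorem sub_le_of_scaledMass_le (hK : ∀ i j, 0 ≤ K i j) {Kmin M : ℝ} (hKmin : 0 < Kmin)
    (hKminM : Kmin ≤ M) (hmin : ∀ i j, 0 < K i j → Kmin ≤ K i j) {d : ℕ}
    (hd : ∀ u v : ι, ∃ m ≤ d, ∃ p : ℕ → ι, p 0 = u ∧ p m = v ∧ ∀ l < m, 0 < K (p l) (p (l + 1)))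
    {z : ι → ℝ} (hM : scaledMass K z ≤ M) (u v : ι) :
    z u - z v ≤ d * log (M / Kmin) := by
  have hMpos : 0 < M := hKmin.trans_le hKminM
  have edge : ∀ i j, 0 < K i j → z i - z j ≤ log (M / Kmin) := fun i j hij =>
    (sub_le_log_div_of_scaledMass_le hK hM hij).trans <| log_le_log (div_pos hMpos hij) <|
      div_le_div_of_nonneg_left hMpos.le hKmin (hmin i j hij)
  obtain ⟨m, hmd, p, rfl, rfl, hp⟩ := hd u v
  calc z (p 0) - z (p m) ≤ m * log (M / Kmin) :=
        sub_le_mul_of_chain z p m fun l hl => edge _ _ (hp l hl)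
    _ ≤ d * log (M / Kmin) := by
      gcongr
      exact log_nonneg ((one_le_div hKmin).2 hKminM)

theorem log_scaledMass_add_le (hK : ∀ i j, 0 ≤ K i j) {z : ι → ℝ} (hz : 0 < scaledMass K z)
    (y : ι → ℝ) :
    log (scaledMass K z) + ∑ k, (∑ j, normalizedScaling K z k j - ∑ i, normalizedScaling K z i k)
      * (y k - z k) ≤ log (scaledMass K y) := by
  set P := normalizedScaling K z
  set u := y - z
  have hy : scaledMass K y = scaledMass K z * ∑ p : ι × ι, P p.1 p.2 * exp (u p.1 - u p.2) := by
    rw [mul_sum, Fintype.sum_prod_type]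
    refine sum_congr rfl fun i _ => sum_congr rfl fun j _ => ?_
    have : y i - y j = (z i - z j) + (u i - u j) := by simp only [u, Pi.sub_apply]; ring
    rw [this, exp_add]
    simp only [P, normalizedScaling]
    field_simp
  have jensen : exp (∑ p : ι × ι, P p.1 p.2 * (u p.1 - u p.2))
      ≤ ∑ p : ι × ι, P p.1 p.2 * exp (u p.1 - u p.2) := by
    simpa only [smul_eq_mul] using convexOn_exp.map_sum_le (t := univ)
      (fun p _ => normalizedScaling_nonneg hK z p.1 p.2)
      (by rw [Fintype.sum_prod_type]; exact sum_sum_normalizedScaling hz.ne')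
      fun p _ => Set.mem_univ (u p.1 - u p.2)
  have hpos := (exp_pos _).trans_le jensen
  calc log (scaledMass K z) + ∑ k, (∑ j, P k j - ∑ i, P i k) * (y k - z k)
      = log (scaledMass K z) + ∑ p : ι × ι, P p.1 p.2 * (u p.1 - u p.2) := by
        rw [Fintype.sum_prod_type, sum_sum_mul_sub P u]; rfl
    _ ≤ log (scaledMass K z) + log (∑ p : ι × ι, P p.1 p.2 * exp (u p.1 - u p.2)) := by
        gcongr
        exact (le_log_iff_exp_le hpos).2 jensen
    _ = log (scaledMass K y) := by rw [hy, log_mul hz.ne' hpos.ne']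

theorem log_scaledMass_sub_le [Nonempty ι] (hK : ∀ i j, 0 ≤ K i j) {z y : ι → ℝ}
    (hz : 0 < scaledMass K z) {D : ℝ} (hD : ∀ u v, (z u - y u) - (z v - y v) ≤ D) :
    log (scaledMass K z) - log (scaledMass K y)
      ≤ (∑ k, |∑ j, normalizedScaling K z k j - ∑ i, normalizedScaling K z i k|) * (D / 2) := by
  set P := normalizedScaling K z
  have hbalance : ∑ k, (∑ j, P k j - ∑ i, P i k) = 0 := by
    rw [sum_sub_distrib, sum_comm (f := fun i k => P i k), sub_self]
  have grad := log_scaledMass_add_le hK hz y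
  calc log (scaledMass K z) - log (scaledMass K y)
      ≤ -∑ k, (∑ j, P k j - ∑ i, P i k) * (y k - z k) := by linarith
    _ = ∑ k, (∑ j, P k j - ∑ i, P i k) * (z k - y k) := by
        rw [← sum_neg_distrib]; exact sum_congr rfl fun k _ => by ring
    _ ≤ _ := sum_mul_le_sum_abs_mul_of_sum_eq_zero hbalance hD

end MatrixScaling

open MatrixScaling

theorem hellinger_imbalance_lower_bound_general (n : ℕ) (K : Matrix (Fin n) (Fin n) ℝ)
    (hK : ∀ i j, 0 ≤ K i j)
    (Kmin : ℝ)
    (hmin : ∀ i j, 0 < K i j → Kmin ≤ K i j)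
    (hmem : ∃ i j, 0 < K i j ∧ K i j = Kmin)
    (d : ℕ)
    (hd : ∀ u v : Fin n, ∃ m ≤ d, ∃ p : ℕ → Fin n,
      p 0 = u ∧ p m = v ∧ ∀ l < m, 0 < K (p l) (p (l + 1)))
    (Φ : (Fin n → ℝ) → ℝ)
    (hΦ : ∀ z, Φ z = Real.log (∑ i, ∑ j, Real.exp (z i - z j) * K i j))
    (xstar : Fin n → ℝ) (hstar : ∀ y, Φ xstar ≤ Φ y)
    (x : Fin n → ℝ) (hx : Φ x ≤ Φ 0)
    (S : ℝ) (hS : S = ∑ i, ∑ j, Real.exp (x i - x j) * K i j)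
    (r c : Fin n → ℝ)
    (hr : ∀ k, r k = (∑ j, Real.exp (x k - x j) * K k j) / S)
    (hc : ∀ k, c k = (∑ i, Real.exp (x i - x k) * K i k) / S)
    (ε : ℝ) (hε : ε < ∑ k, |r k - c k|) :
    (1 / 2) * ∑ k, (Real.sqrt (r k) - Real.sqrt (c k)) ^ 2
      ≥ (1 / 8) * (max ((Φ x - Φ xstar)
          / (d * Real.log ((∑ i, ∑ j, K i j) / Kmin))) ε) ^ 2 := by
  obtain ⟨i₀, j₀, hK₀, hKmin⟩ := hmem
  have : Nonempty (Fin n) := ⟨i₀⟩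
  have hΦ : ∀ z, Φ z = log (scaledMass K z) := hΦ
  have hmass : ∀ z, 0 < scaledMass K z := scaledMass_pos hK hK₀
  have hrP : ∀ k, r k = ∑ j, normalizedScaling K x k j := fun k => by rw [hr, sum_div, hS]; rfl
  have hcP : ∀ k, c k = ∑ i, normalizedScaling K x i k := fun k => by rw [hc, sum_div, hS]; rfl
  have hr1 : ∑ k, r k = 1 := by
    simp only [hrP]; exact sum_sum_normalizedScaling (hmass x).ne'
  have hc1 : ∑ k, c k = 1 := by
    simp only [hcP]; rw [sum_comm]; exact sum_sum_normalizedScaling (hmass x).ne'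
  set L := d * log ((∑ i, ∑ j, K i j) / Kmin)
  have osc : ∀ z, Φ z ≤ Φ 0 → ∀ u v, z u - z v ≤ L := by
    intro z hz
    rw [hΦ, hΦ, log_le_log_iff (hmass z) (hmass 0), scaledMass_zero] at hz
    refine sub_le_of_scaledMass_le hK (hKmin ▸ hK₀) ?_ hmin hd hz
    simpa [← hKmin, scaledMass_zero] using exp_sub_mul_le_scaledMass hK 0 i₀ j₀
  have gap : Φ x - Φ xstar ≤ (∑ k, |r k - c k|) * L := by
    have := log_scaledMass_sub_le hK (hmass x) (y := xstar) (D := 2 * L) fun u v => by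
      linarith [osc x hx u v, osc xstar (hstar 0) v u]
    rw [← hΦ, ← hΦ, mul_div_cancel_left₀ _ two_ne_zero] at this
    simpa only [hrP, hcP] using this
  have hL : 0 ≤ L := by simpa using osc x hx i₀ i₀
  have hmax : max ((Φ x - Φ xstar) / L) ε ≤ ∑ k, |r k - c k| :=
    max_le (div_le_of_le_mul₀ hL (sum_nonneg fun k _ => abs_nonneg _) gap) hε.le
  have hmax₀ : 0 ≤ max ((Φ x - Φ xstar) / L) ε :=
    le_max_of_le_left (div_nonneg (sub_nonneg.2 (hstar x)) hL)
  have hellinger := sq_sum_abs_sub_le_sum_mul_sum_sq_sqrt_sub univ (r := r) (c := c)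
    (fun k _ => by rw [hrP]; exact sum_nonneg fun j _ => normalizedScaling_nonneg hK x k j)
    (fun k _ => by rw [hcP]; exact sum_nonneg fun i _ => normalizedScaling_nonneg hK x i k)
  rw [hr1, hc1] at hellinger
  calc (1 / 8) * (max ((Φ x - Φ xstar) / L) ε) ^ 2 ≤ (1 / 8) * (∑ k, |r k - c k|) ^ 2 := by
        gcongr
    _ ≤ (1 / 2) * ∑ k, (√(r k) - √(c k)) ^ 2 := by linarith

/-- Lower bound on the Hellinger imbalance of a nontrivial, not ε-balanced scaling. -/
theorem hellinger_imbalance_lower_bound (n : ℕ) (K : Matrix (Fin n) (Fin n) ℝ)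
    (hK : ∀ i j, 0 ≤ K i j) (hpos : ∃ i j, 0 < K i j)
    (Kmin : ℝ)
    (hmin : ∀ i j, 0 < K i j → Kmin ≤ K i j)
    (hmem : ∃ i j, 0 < K i j ∧ K i j = Kmin)
    (d : ℕ) (hdpos : 0 < d)
    (hd : ∀ u v : Fin n, ∃ m ≤ d, ∃ p : ℕ → Fin n,
      p 0 = u ∧ p m = v ∧ ∀ l < m, 0 < K (p l) (p (l + 1)))
    (Φ : (Fin n → ℝ) → ℝ)
    (hΦ : ∀ z, Φ z = Real.log (∑ i, ∑ j, Real.exp (z i - z j) * K i j))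
    (xstar : Fin n → ℝ) (hstar : ∀ y, Φ xstar ≤ Φ y)
    (x : Fin n → ℝ) (hx : Φ x ≤ Φ 0)
    (S : ℝ) (hS : S = ∑ i, ∑ j, Real.exp (x i - x j) * K i j)
    (r c : Fin n → ℝ)
    (hr : ∀ k, r k = (∑ j, Real.exp (x k - x j) * K k j) / S)
    (hc : ∀ k, c k = (∑ i, Real.exp (x i - x k) * K i k) / S)
    (ε : ℝ) (hε : ε < ∑ k, |r k - c k|) :
    (1 / 2) * ∑ k, (Real.sqrt (r k) - Real.sqrt (c k)) ^ 2
      ≥ (1 / 8) * (max ((Φ x - Φ xstar)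
          / (d * Real.log ((∑ i, ∑ j, K i j) / Kmin))) ε) ^ 2 :=
  hellinger_imbalance_lower_bound_general n K hK Kmin hmin hmem d hd Φ hΦ xstar hstar x hx S hS r c
    hr hc ε hε
end

section
/- Approximately balancing an approximate matrix suffices: Let K, K̃ ∈ ℝ_{≥0}^{n×n} have the same support, with K_{ij}/K̃_{ij} ∈ [1−γ, 1+γ] for all (i,j) in the support, where γ ∈ (0, 1/3). If x ∈ ℝⁿ is an ε-balancing of K (i.e., for A = diag(e^x)K diag(e^{−x}), ‖r(A) − c(A)‖₁ ≤ ε·Σ_{ij}A_{ij}), then x is an (ε + 6nγ)-balancing of K̃. -/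
/-!
Write `A` and `B` for the conjugates `diag(eˣ) K diag(e⁻ˣ)` and `diag(eˣ) K̃ diag(e⁻ˣ)`. The ratio
hypothesis together with the common support gives `|A i j - B i j| ≤ γ B i j` entrywise, so every
row and column sum of `A` is within `γ` times the corresponding sum of `B`, and the total mass of
`A` lies between `(1 - γ)` and `(1 + γ)` times that of `B`. Each row and each column sum of `B`
enters the `ℓ¹` imbalance once, so the imbalance of `B` exceeds that of `A` by at most `2γ` times
the mass of `B`, giving the bound `(ε + 4γ)`. For `ε ≥ 2` the trivial bound (imbalance at most
twice the mass) is used instead, and `ε < 0` forces both masses to vanish.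
-/

open Finset

lemma abs_sub_le_mul_of_div_mem_Icc {a b γ : ℝ} (ha : 0 ≤ a) (hb : 0 ≤ b) (hsupp : 0 < a → 0 < b)
    (hratio : 0 < b → a / b ∈ Set.Icc (1 - γ) (1 + γ)) : |a - b| ≤ γ * b := by
  rcases hb.eq_or_lt with hb0 | hbpos
  · have ha0 : a = 0 := le_antisymm (not_lt.1 fun h => (hsupp h).ne hb0) ha
    simp [ha0, ← hb0]
  · obtain ⟨hlo, hhi⟩ := hratio hbpos
    rw [le_div_iff₀ hbpos] at hlo
    rw [div_le_iff₀ hbpos] at hhi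
    rw [abs_le]
    constructor <;> linarith

lemma Finset.abs_sum_sub_sum_le_mul_sum {ι : Type*} {s : Finset ι} {f g : ι → ℝ} {γ : ℝ}
    (h : ∀ i ∈ s, |f i - g i| ≤ γ * g i) :
    |∑ i ∈ s, f i - ∑ i ∈ s, g i| ≤ γ * ∑ i ∈ s, g i := by
  rw [← sum_sub_distrib, mul_sum]
  exact (abs_sum_le_sum_abs _ _).trans (sum_le_sum h)

namespace Matrix

variable {ι : Type*}

/-- The conjugate `diag(eˣ) K diag(e⁻ˣ)`. -/
noncomputable def expConj (x : ι → ℝ) (K : Matrix ι ι ℝ) : Matrix ι ι ℝ :=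
  of fun i j => Real.exp (x i - x j) * K i j

lemma abs_expConj_sub_le {K L : Matrix ι ι ℝ} {γ : ℝ} (x : ι → ℝ)
    (h : ∀ i j, |K i j - L i j| ≤ γ * L i j) (i j : ι) :
    |expConj x K i j - expConj x L i j| ≤ γ * expConj x L i j := by
  simp only [expConj, of_apply]
  rw [← mul_sub, abs_mul, abs_of_pos (Real.exp_pos _), mul_left_comm]
  exact mul_le_mul_of_nonneg_left (h i j) (Real.exp_pos _).le

lemma expConj_nonneg {K : Matrix ι ι ℝ} (x : ι → ℝ) (hK : ∀ i j, 0 ≤ K i j) (i j : ι) :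
    0 ≤ expConj x K i j :=
  mul_nonneg (Real.exp_pos _).le (hK i j)

variable [Fintype ι]

/-- The `ℓ¹` distance `‖r(A) - c(A)‖₁` between the row sums and the column sums of `A`. -/
def imbalance (A : Matrix ι ι ℝ) : ℝ :=
  ∑ k, |∑ j, A k j - ∑ i, A i k|

def entrySum (A : Matrix ι ι ℝ) : ℝ :=
  ∑ i, ∑ j, A i j

variable {A B : Matrix ι ι ℝ} {γ : ℝ}

lemma sum_rowSum_add_colSum (B : Matrix ι ι ℝ) :
    ∑ k, (∑ j, B k j + ∑ i, B i k) = 2 * entrySum B := by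
  rw [sum_add_distrib, two_mul, entrySum]
  exact congrArg _ sum_comm

lemma abs_entrySum_sub_le (h : ∀ i j, |A i j - B i j| ≤ γ * B i j) :
    |entrySum A - entrySum B| ≤ γ * entrySum B :=
  abs_sum_sub_sum_le_mul_sum fun i _ => abs_sum_sub_sum_le_mul_sum fun j _ => h i j

lemma imbalance_le_imbalance_add (h : ∀ i j, |A i j - B i j| ≤ γ * B i j) :
    imbalance B ≤ imbalance A + 2 * γ * entrySum B := by
  have hk : ∀ k, |∑ j, B k j - ∑ i, B i k|
      ≤ |∑ j, A k j - ∑ i, A i k| + γ * (∑ j, B k j + ∑ i, B i k) := by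
    intro k
    have hrow := abs_le.1 (abs_sum_sub_sum_le_mul_sum (s := univ) fun j _ => h k j)
    have hcol := abs_le.1 (abs_sum_sub_sum_le_mul_sum (s := univ) fun i _ => h i k)
    have hA := abs_le.1 (le_refl |∑ j, A k j - ∑ i, A i k|)
    rw [abs_le]
    constructor <;> linarith
  calc imbalance B
      ≤ ∑ k, (|∑ j, A k j - ∑ i, A i k| + γ * (∑ j, B k j + ∑ i, B i k)) :=
        sum_le_sum fun k _ => hk k
    _ = imbalance A + 2 * γ * entrySum B := by
        rw [sum_add_distrib, ← mul_sum, sum_rowSum_add_colSum, imbalance]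
        ring

lemma imbalance_le_two_mul_entrySum (hB : ∀ i j, 0 ≤ B i j) :
    imbalance B ≤ 2 * entrySum B := by
  rw [← sum_rowSum_add_colSum]
  refine sum_le_sum fun k _ => (abs_sub _ _).trans_eq ?_
  rw [abs_of_nonneg (sum_nonneg fun j _ => hB k j), abs_of_nonneg (sum_nonneg fun i _ => hB i k)]

lemma imbalance_le_of_abs_sub_le {ε : ℝ} (hB : ∀ i j, 0 ≤ B i j)
    (h : ∀ i j, |A i j - B i j| ≤ γ * B i j) (hγ0 : 0 ≤ γ) (hγ1 : γ < 1)
    (hA : imbalance A ≤ ε * entrySum A) :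
    imbalance B ≤ (ε + 4 * γ) * entrySum B := by
  have hT : 0 ≤ entrySum B := sum_nonneg fun i _ => sum_nonneg fun j _ => hB i j
  have hLA : 0 ≤ imbalance A := sum_nonneg fun k _ => abs_nonneg _
  have hS := abs_le.1 (abs_entrySum_sub_le h)
  have hadd := imbalance_le_imbalance_add h
  have htriv := imbalance_le_two_mul_entrySum hB
  rcases lt_or_ge ε 0 with hε | hε
  · have hS0 : entrySum A ≤ 0 := nonpos_of_mul_nonneg_right (hLA.trans hA) hε
    have hT0 : entrySum B = 0 := by nlinarith
    rw [hT0] at htriv ⊢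
    linarith
  rcases le_or_gt 2 ε with hε2 | hε2
  · nlinarith [mul_nonneg (sub_nonneg.2 hε2) hT, mul_nonneg hγ0 hT]
  · nlinarith [mul_le_mul_of_nonneg_left hS.2 hε,
      mul_nonneg (mul_nonneg (sub_nonneg.2 hε2.le) hγ0) hT]

end Matrix

open Matrix in
/-- Approximately balancing an approximate matrix suffices. -/
theorem approx_balance_approx_matrix (n : ℕ) (K Kt : Matrix (Fin n) (Fin n) ℝ)
    (hK : ∀ i j, 0 ≤ K i j) (hKt : ∀ i j, 0 ≤ Kt i j)
    (hsupp : ∀ i j, 0 < K i j ↔ 0 < Kt i j)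
    (γ : ℝ) (hγ : γ ∈ Set.Ioo (0 : ℝ) (1 / 3))
    (hratio : ∀ i j, 0 < Kt i j → K i j / Kt i j ∈ Set.Icc (1 - γ) (1 + γ))
    (x : Fin n → ℝ) (ε : ℝ)
    (hbal : ∑ k, |(∑ j, Real.exp (x k - x j) * K k j)
        - (∑ i, Real.exp (x i - x k) * K i k)|
      ≤ ε * ∑ i, ∑ j, Real.exp (x i - x j) * K i j) :
    ∑ k, |(∑ j, Real.exp (x k - x j) * Kt k j)
        - (∑ i, Real.exp (x i - x k) * Kt i k)|
      ≤ (ε + 6 * n * γ) * ∑ i, ∑ j, Real.exp (x i - x j) * Kt i j := by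
  rcases n.eq_zero_or_pos with rfl | hn
  · simp
  have hentry : ∀ i j, |K i j - Kt i j| ≤ γ * Kt i j := fun i j =>
    abs_sub_le_mul_of_div_mem_Icc (hK i j) (hKt i j) (hsupp i j).1 (hratio i j)
  have key := imbalance_le_of_abs_sub_le (expConj_nonneg x hKt) (abs_expConj_sub_le x hentry)
    hγ.1.le (by linarith [hγ.2]) hbal
  have hT : 0 ≤ entrySum (expConj x Kt) :=
    sum_nonneg fun i _ => sum_nonneg fun j _ => expConj_nonneg x hKt i j
  have hn' : (1 : ℝ) ≤ n := by exact_mod_cast hn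
  change imbalance (expConj x Kt) ≤ _ * entrySum (expConj x Kt)
  calc imbalance (expConj x Kt) ≤ (ε + 4 * γ) * entrySum (expConj x Kt) := key
    _ ≤ (ε + 6 * n * γ) * entrySum (expConj x Kt) := by
        gcongr
        · exact hγ.1.le
        · linarith
end
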